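/- arXiv:2306.14535 — 4 statements merged into one kernel-verified Lean document; each statement's English description precedes it below -/
import Mathlib

section
/- For any x0 ∈ (0,1), L > 0, and h small enough (so that f_{L,x0,h} is a density and 1 - L h² + L h ≤ 2), the Kullback–Leibler divergence from the uniform distribution on [0,1] to the distribution with triangle perturbation density f_{L,x0,h} satisfies KL(Uniform ‖ P_{f}) ≤ C(h³ + h⁴) for a constant C depending only on L. -/
/-!
Outside `[x0 - h, x0 + h]` the density is the constant `a = 1 - L h²` and on the bump it is
linear with slopes `±L`, so the divergence equals
`(1 - 2h)(-log a) + (2/L) ∫_a^{a + L h} -log y dy`.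
If `L h² ≤ 1/2`, the density stays above `1/2`, where `-log y ≤ (1 - y) + 2 (1 - y)²`; integrating
this quadratic bound, the terms of order `h²` cancel and `O(L² h³)` remains. If `L h² > 1/2`, the
divergence is at most `3/2` because the singularity of `log` is integrable, while `h ≤ 1/2` gives
`L² h³ ≥ 2 L² h⁴ > 1/2`.
-/

open MeasureTheory Set

/-- The triangle perturbation density. -/
noncomputable def triDens (L x0 h x : ℝ) : ℝ :=
  1 - L * h ^ 2 + max (L * (h - |x - x0|)) 0

open Real intervalIntegral

theorem integral_neg_to_self_comp_abs {g : ℝ → ℝ} (hg : Continuous g) {h : ℝ} (hh : 0 ≤ h) :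
    ∫ y in -h..h, g |y| = 2 * ∫ y in 0..h, g y := by
  have hint : ∀ p q : ℝ, IntervalIntegrable (fun y ↦ g |y|) volume p q :=
    fun p q ↦ (hg.comp continuous_abs).intervalIntegrable p q
  have hpos : ∫ y in 0..h, g |y| = ∫ y in 0..h, g y :=
    integral_congr fun y hy ↦ by
      rw [uIcc_of_le hh] at hy
      simp only [abs_of_nonneg hy.1]
  have hneg : ∫ y in -h..0, g |y| = ∫ y in 0..h, g |y| := by
    simpa using (integral_comp_neg (a := 0) (b := h) fun y ↦ g |y|).symm
  rw [← integral_add_adjacent_intervals (hint _ 0) (hint 0 _), hneg, hpos]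
  ring

theorem integral_comp_abs_sub_of_eqOn_Ici {g : ℝ → ℝ} (hg : Continuous g) {c x0 h : ℝ}
    (hgc : EqOn g (fun _ ↦ c) (Ici h)) (hh : 0 ≤ h) (h0 : h ≤ x0) (h1 : x0 + h ≤ 1) :
    ∫ x in 0..1, g |x - x0| = (1 - 2 * h) * c + 2 * ∫ t in 0..h, g t := by
  have hint : ∀ p q : ℝ, IntervalIntegrable (fun x ↦ g |x - x0|) volume p q :=
    fun p q ↦ (hg.comp (continuous_abs.comp (continuous_sub_right x0))).intervalIntegrable p q
  have hleft : ∫ x in 0..x0 - h, g |x - x0| = (x0 - h) * c := by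
    rw [integral_congr (g := fun _ ↦ c), intervalIntegral.integral_const, smul_eq_mul, sub_zero]
    intro x hx
    rw [uIcc_of_le (by linarith)] at hx
    exact hgc <| show h ≤ |x - x0| by
      rw [abs_sub_comm]; exact le_abs.2 (Or.inl (by linarith [hx.2]))
  have hright : ∫ x in x0 + h..1, g |x - x0| = (1 - (x0 + h)) * c := by
    rw [integral_congr (g := fun _ ↦ c), intervalIntegral.integral_const, smul_eq_mul]
    intro x hx
    rw [uIcc_of_le h1] at hx
    exact hgc (show h ≤ |x - x0| from le_abs.2 (Or.inl (by linarith [hx.1])))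
  have hmid : ∫ x in x0 - h..x0 + h, g |x - x0| = 2 * ∫ t in 0..h, g t := by
    rw [integral_comp_sub_right (fun y ↦ g |y|), sub_sub_cancel_left, add_sub_cancel_left,
      integral_neg_to_self_comp_abs hg hh]
  rw [← integral_add_adjacent_intervals (hint 0 (x0 - h)) (hint _ 1),
    ← integral_add_adjacent_intervals (hint (x0 - h) (x0 + h)) (hint _ 1), hleft, hmid, hright]
  ring

theorem neg_log_le_of_half_le {y : ℝ} (hy : 1 / 2 ≤ y) : -log y ≤ (1 - y) + 2 * (1 - y) ^ 2 := by
  have hy0 : 0 < y := by linarith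
  have hlog : -log y ≤ y⁻¹ - 1 := by
    simpa [log_inv] using log_le_sub_one_of_pos (inv_pos.2 hy0)
  have hinv : y⁻¹ - 1 = (1 - y) + (1 - y) ^ 2 / y := by field_simp; ring
  have hsq : (1 - y) ^ 2 / y ≤ 2 * (1 - y) ^ 2 := by
    rw [div_le_iff₀ hy0]; nlinarith [sq_nonneg (1 - y)]
  linarith

theorem integral_neg_log_le_of_half_le {a b : ℝ} (ha : 1 / 2 ≤ a) (hab : a ≤ b) :
    ∫ y in a..b, -log y ≤
      ((1 - a) ^ 2 - (1 - b) ^ 2) / 2 + 2 * ((1 - a) ^ 3 - (1 - b) ^ 3) / 3 := by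
  have hpoly : ∫ y in a..b, ((1 - y) + 2 * (1 - y) ^ 2) =
      ((1 - a) ^ 2 - (1 - b) ^ 2) / 2 + 2 * ((1 - a) ^ 3 - (1 - b) ^ 3) / 3 := by
    rw [integral_comp_sub_left (fun t ↦ t + 2 * t ^ 2)]
    simp only [intervalIntegrable_id, intervalIntegrable_pow, IntervalIntegrable.const_mul,
      intervalIntegral.integral_add, integral_id, intervalIntegral.integral_const_mul, integral_pow]
    ring
  rw [← hpoly]
  refine integral_mono_on hab ?_ ((by fun_prop : Continuous _).intervalIntegrable _ _)
    fun y hy ↦ neg_log_le_of_half_le (ha.trans hy.1)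
  exact (continuousOn_log.mono fun y hy ↦ by
    rw [uIcc_of_le hab] at hy; exact (by linarith [hy.1] : (0:ℝ) < y).ne').neg.intervalIntegrable

theorem integral_neg_log_le_one_sub {a b : ℝ} (ha0 : 0 ≤ a) (ha1 : a ≤ 1) (hb : 0 ≤ b) :
    ∫ y in a..b, -log y ≤ 1 - a := by
  rw [intervalIntegral.integral_neg, integral_log]
  nlinarith [mul_log_nonpos ha0 ha1, self_sub_one_le_mul_log hb]

noncomputable def triKL (L h : ℝ) : ℝ :=
  (1 - 2 * h) * -log (1 - L * h ^ 2) + 2 / L * ∫ y in 1 - L * h ^ 2..1 - L * h ^ 2 + L * h, -log y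

theorem integral_neg_log_triDens {L x0 h : ℝ} (hL : 0 < L) (hLh : L * h ^ 2 < 1) (hh : 0 ≤ h)
    (h0 : h ≤ x0) (h1 : x0 + h ≤ 1) :
    ∫ x in 0..1, -log (triDens L x0 h x) = triKL L h := by
  set a := 1 - L * h ^ 2
  have hg : Continuous fun r ↦ -log (a + max (L * (h - r)) 0) :=
    (Continuous.log (by fun_prop) fun r ↦ by positivity).neg
  have hgc : EqOn (fun r ↦ -log (a + max (L * (h - r)) 0)) (fun _ ↦ -log a) (Ici h) :=
    fun r hr ↦ by
      dsimp only
      rw [max_eq_right (mul_nonpos_of_nonneg_of_nonpos hL.le (sub_nonpos.2 hr)), add_zero]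
  have hbump :
      ∫ r in 0..h, -log (a + max (L * (h - r)) 0) = L⁻¹ * ∫ y in a..a + L * h, -log y := by
    rw [integral_congr (g := fun r ↦ -log (-L * r + (a + L * h))),
      integral_comp_mul_add (fun y ↦ -log y) (neg_ne_zero.2 hL.ne'), integral_symm]
    · rw [smul_eq_mul, mul_zero, zero_add, neg_mul, neg_add_cancel_comm_assoc, inv_neg]
      ring
    · intro r hr
      rw [uIcc_of_le hh] at hr
      simp only [max_eq_left (mul_nonneg hL.le (sub_nonneg.2 hr.2))]
      ring_nf
  simp only [triDens]
  rw [integral_comp_abs_sub_of_eqOn_Ici hg hgc hh h0 h1, hbump, triKL]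
  ring

theorem triKL_le_of_le_half {L h : ℝ} (hL : 0 < L) (hh : 0 ≤ h) (hh2 : h ≤ 1 / 2)
    (hu : L * h ^ 2 ≤ 1 / 2) : triKL L h ≤ 3 * L ^ 2 * (h ^ 3 + h ^ 4) := by
  have hout := neg_log_le_of_half_le (y := 1 - L * h ^ 2) (by linarith)
  have hbump := integral_neg_log_le_of_half_le (a := 1 - L * h ^ 2) (b := 1 - L * h ^ 2 + L * h)
    (by linarith) (le_add_of_nonneg_right (by positivity))
  have hpoly : 2 / L * (((1 - (1 - L * h ^ 2)) ^ 2 - (1 - (1 - L * h ^ 2 + L * h)) ^ 2) / 2 +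
      2 * ((1 - (1 - L * h ^ 2)) ^ 3 - (1 - (1 - L * h ^ 2 + L * h)) ^ 3) / 3) =
      L * h ^ 2 * (2 * h - 1) + 4 / 3 * L ^ 2 * (h ^ 6 + h ^ 3 * (1 - h) ^ 3) := by
    field_simp
    ring
  calc triKL L h
      ≤ (1 - 2 * h) * (L * h ^ 2 + 2 * (L * h ^ 2) ^ 2) +
          (L * h ^ 2 * (2 * h - 1) + 4 / 3 * L ^ 2 * (h ^ 6 + h ^ 3 * (1 - h) ^ 3)) := by
        rw [triKL, ← hpoly]
        gcongr
        · linarith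
        · linarith
    _ ≤ 3 * L ^ 2 * (h ^ 3 + h ^ 4) := by
        nlinarith [sq_nonneg L, pow_nonneg hh 3, pow_nonneg hh 4]

theorem triKL_le_of_half_lt {L h : ℝ} (hL : 0 < L) (hh : 0 ≤ h) (hh2 : h ≤ 1 / 2)
    (hu : 1 / 2 < L * h ^ 2) (hu1 : L * h ^ 2 < 1) (hmax : 1 - L * h ^ 2 + L * h ≤ 2) :
    triKL L h ≤ 3 * L ^ 2 * (h ^ 3 + h ^ 4) := by
  set a := 1 - L * h ^ 2 with ha
  have ha0 : 0 < a := by linarith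
  have hLh : L * h ≤ 2 := by nlinarith
  have hout : (1 - 2 * h) * -log a ≤ 1 - a := by
    have hlog : 0 ≤ -log a := neg_nonneg.2 (log_nonpos ha0.le (by linarith))
    have : 1 - 2 * h ≤ a := by nlinarith
    nlinarith [self_sub_one_le_mul_log ha0.le]
  have hbump : 2 / L * ∫ y in a..a + L * h, -log y ≤ 2 * h ^ 2 := by
    calc 2 / L * ∫ y in a..a + L * h, -log y ≤ 2 / L * (1 - a) := by
          gcongr
          exact integral_neg_log_le_one_sub ha0.le (by linarith) (by positivity)
      _ = 2 * h ^ 2 := by rw [ha]; field_simp; ring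
  have hh4 : 1 / 4 < L ^ 2 * h ^ 4 := by nlinarith
  calc triKL L h ≤ (1 - a) + 2 * h ^ 2 := add_le_add hout hbump
    _ ≤ 3 * L ^ 2 * (h ^ 3 + h ^ 4) := by nlinarith [pow_nonneg hh 3]

/-- KL divergence from the uniform distribution on `[0,1]` to the triangle
perturbation distribution: `KL(Uniform ‖ P_f) = ∫₀¹ log(1 / f) ≤ C (h³ + h⁴)`
for a constant `C` depending only on `L`. -/
theorem kl_uniform_triDens_le (L : ℝ) (hL : 0 < L) :
    ∃ C : ℝ, 0 < C ∧ ∀ x0 h : ℝ, x0 ∈ Set.Ioo (0 : ℝ) 1 → 0 < h →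
      h ≤ min x0 (1 - x0) → L * h ^ 2 < 1 → 1 - L * h ^ 2 + L * h ≤ 2 →
      (∫ x in Set.Icc (0 : ℝ) 1, Real.log (1 / triDens L x0 h x))
        ≤ C * (h ^ 3 + h ^ 4) := by
  refine ⟨3 * L ^ 2, by positivity, fun x0 h _ hh hmin hu1 hmax ↦ ?_⟩
  have h0 : h ≤ x0 := hmin.trans (min_le_left _ _)
  have h1 : x0 + h ≤ 1 := by linarith [hmin.trans (min_le_right _ _)]
  have hKL : ∫ x in Icc (0 : ℝ) 1, log (1 / triDens L x0 h x) = triKL L h := by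
    rw [integral_Icc_eq_integral_Ioc, ← intervalIntegral.integral_of_le zero_le_one,
      ← integral_neg_log_triDens hL hu1 hh.le h0 h1]
    simp only [one_div, log_inv]
  rw [hKL]
  rcases le_or_gt (L * h ^ 2) (1 / 2) with hu | hu
  · exact triKL_le_of_le_half hL hh.le (by linarith) hu
  · exact triKL_le_of_half_lt hL hh.le (by linarith) hu hu1 hmax
end

section
/- For ω, ω' ∈ {0,1}^m and the multi-triangle densities g_{L,ω,h}, g_{L,ω',h} on [0,1] with disjoint bump supports (h ≤ 1/(2(m+1))), the total variation distance satisfies TV(P_{g_{L,ω,h}}, P_{g_{L,ω',h}}) ≤ (1/2)(| ‖ω‖₁ - ‖ω'‖₁ | + d_H(ω,ω')) L h² ≤ m L h², where d_H denotes Hamming distance. -/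
open MeasureTheory Set

noncomputable def triK (L h t : ℝ) : ℝ := max (L * (h - |t|)) 0

def wOne {m : ℕ} (ω : Fin m → Bool) : ℕ := (Finset.univ.filter fun i => ω i = true).card

/-- Hamming distance between `ω, ω' ∈ {0,1}^m`. -/
def hamDist {m : ℕ} (ω ω' : Fin m → Bool) : ℕ :=
  (Finset.univ.filter fun i => ω i ≠ ω' i).card

noncomputable def gMulti (L h : ℝ) (m : ℕ) (ω : Fin m → Bool) (t : ℝ) : ℝ :=
  1 - (wOne ω : ℝ) * L * h ^ 2 +
    ∑ i : Fin m, (if ω i then (1 : ℝ) else 0) * triK L h (t - ((i : ℕ) + 1) / ((m : ℕ) + 1))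

/-!
Writing `Kᵢ` for the bump centred at `(i+1)/(m+1)`, the difference `g_ω - g_ω'` is the constant
`(‖ω'‖₁ - ‖ω‖₁) L h²` plus `∑ᵢ (ωᵢ - ω'ᵢ) Kᵢ`, and `|ωᵢ - ω'ᵢ|` is the indicator of `ωᵢ ≠ ω'ᵢ`.
The triangle inequality bounds `|g_ω - g_ω'|` by `|‖ω‖₁ - ‖ω'‖₁| L h² + ∑_{ωᵢ ≠ ω'ᵢ} Kᵢ`, and
integrating over `[0, 1]` with `∫ Kᵢ = L h²` gives the first bound. The second holds because
`‖ω‖₁`, `‖ω'‖₁` and `d_H(ω, ω')` all lie in `[0, m]`.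
-/

section TriangleKernel

variable {L h : ℝ}

lemma triK_nonneg (L h t : ℝ) : 0 ≤ triK L h t := le_max_right _ _

lemma continuous_triK (L h : ℝ) : Continuous (triK L h) :=
  (continuous_const.mul (continuous_const.sub continuous_abs)).max continuous_const

lemma triK_eq_indicator (hL : 0 ≤ L) :
    triK L h = (Icc (-h) h).indicator fun t => L * (h - |t|) := by
  ext t
  by_cases ht : |t| ≤ h
  · rw [indicator_of_mem (show t ∈ Icc (-h) h from abs_le.mp ht)]
    exact max_eq_left (mul_nonneg hL (sub_nonneg.mpr ht))
  · rw [indicator_of_notMem (show t ∉ Icc (-h) h from fun h' => ht (abs_le.mpr h'))]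
    exact max_eq_right (mul_nonpos_of_nonneg_of_nonpos hL (by linarith))

lemma hasCompactSupport_triK (hL : 0 ≤ L) : HasCompactSupport (triK L h) := by
  rw [triK_eq_indicator hL]
  exact HasCompactSupport.intro isCompact_Icc fun _ ht => indicator_of_notMem ht _

lemma integrable_triK_comp_sub (hL : 0 ≤ L) (c : ℝ) : Integrable fun t => triK L h (t - c) :=
  ((continuous_triK L h).integrable_of_hasCompactSupport
    (hasCompactSupport_triK hL)).comp_sub_right c

lemma integral_abs_neg_to_self (hh : 0 ≤ h) : ∫ t in (-h)..h, |t| = h ^ 2 := by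
  have hsymm : ∫ t in (-h)..0, |t| = ∫ t in (0 : ℝ)..h, |t| := by
    simpa using (intervalIntegral.integral_comp_neg (a := 0) (b := h) fun t => |t|).symm
  have hpos : ∫ t in (0 : ℝ)..h, |t| = ∫ t in (0 : ℝ)..h, t :=
    intervalIntegral.integral_congr fun t ht =>
      abs_of_nonneg (by rw [uIcc_of_le hh] at ht; exact ht.1)
  rw [← intervalIntegral.integral_add_adjacent_intervals (b := 0)
      (continuous_abs.intervalIntegrable _ _) (continuous_abs.intervalIntegrable _ _), hsymm, hpos,
    integral_id]
  ring

lemma integral_triK (hL : 0 ≤ L) (hh : 0 ≤ h) : ∫ t, triK L h t = L * h ^ 2 := by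
  rw [triK_eq_indicator hL, integral_indicator measurableSet_Icc, integral_Icc_eq_integral_Ioc,
    ← intervalIntegral.integral_of_le (by linarith), intervalIntegral.integral_const_mul,
    intervalIntegral.integral_sub intervalIntegrable_const (continuous_abs.intervalIntegrable _ _),
    integral_abs_neg_to_self hh, intervalIntegral.integral_const, smul_eq_mul]
  ring

lemma setIntegral_triK_comp_sub_le (hL : 0 ≤ L) (hh : 0 ≤ h) (s : Set ℝ) (c : ℝ) :
    ∫ t in s, triK L h (t - c) ≤ L * h ^ 2 := by
  calc ∫ t in s, triK L h (t - c) ≤ ∫ t, triK L h (t - c) :=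
        setIntegral_le_integral (integrable_triK_comp_sub hL c)
          (Filter.Eventually.of_forall fun _ => triK_nonneg _ _ _)
    _ = L * h ^ 2 := by rw [integral_sub_right_eq_self (triK L h), integral_triK hL hh]

end TriangleKernel

lemma abs_ite_one_zero_sub (a b : Bool) :
    |(if a then (1 : ℝ) else 0) - (if b then 1 else 0)| = if a ≠ b then 1 else 0 := by
  cases a <;> cases b <;> simp

section MultiTriangle

variable {m : ℕ} (ω ω' : Fin m → Bool) {L h : ℝ}

lemma wOne_le : wOne ω ≤ m :=
  (Finset.card_filter_le _ _).trans_eq (Finset.card_fin m)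

lemma hamDist_le : hamDist ω ω' ≤ m :=
  (Finset.card_filter_le _ _).trans_eq (Finset.card_fin m)

lemma continuous_gMulti (L h : ℝ) : Continuous (gMulti L h m ω) :=
  continuous_const.add <| continuous_finsetSum _ fun _ _ =>
    continuous_const.mul ((continuous_triK L h).comp (continuous_id.sub continuous_const))

lemma abs_gMulti_sub_le (hL : 0 ≤ L) (t : ℝ) :
    |gMulti L h m ω t - gMulti L h m ω' t| ≤
      |(wOne ω : ℝ) - wOne ω'| * (L * h ^ 2) +
        ∑ i with ω i ≠ ω' i, triK L h (t - ((i : ℕ) + 1) / ((m : ℕ) + 1)) := by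
  have hdiff : gMulti L h m ω t - gMulti L h m ω' t =
      ((wOne ω' : ℝ) - wOne ω) * (L * h ^ 2) +
        ∑ i, ((if ω i then (1 : ℝ) else 0) - (if ω' i then 1 else 0)) *
          triK L h (t - ((i : ℕ) + 1) / ((m : ℕ) + 1)) := by
    simp only [gMulti, sub_mul, Finset.sum_sub_distrib]
    ring
  rw [hdiff, Finset.sum_filter]
  refine (abs_add_le _ _).trans (add_le_add ?_ ?_)
  · rw [abs_mul, abs_of_nonneg (by positivity : 0 ≤ L * h ^ 2), abs_sub_comm]
  · refine (Finset.abs_sum_le_sum_abs _ _).trans_eq (Finset.sum_congr rfl fun i _ => ?_)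
    rw [abs_mul, abs_ite_one_zero_sub, abs_of_nonneg (triK_nonneg _ _ _), ite_mul, one_mul,
      zero_mul]

lemma integral_abs_gMulti_sub_le (hL : 0 ≤ L) (hh : 0 ≤ h) :
    ∫ t in Icc (0 : ℝ) 1, |gMulti L h m ω t - gMulti L h m ω' t| ≤
      (|(wOne ω : ℝ) - wOne ω'| + hamDist ω ω') * (L * h ^ 2) := by
  set A := |(wOne ω : ℝ) - wOne ω'| * (L * h ^ 2)
  set K : Fin m → ℝ → ℝ := fun i t => triK L h (t - ((i : ℕ) + 1) / ((m : ℕ) + 1))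
  have hK : Integrable (fun t => ∑ i with ω i ≠ ω' i, K i t) (volume.restrict (Icc 0 1)) :=
    integrable_finsetSum _ fun i _ => (integrable_triK_comp_sub hL _).integrableOn
  calc ∫ t in Icc (0 : ℝ) 1, |gMulti L h m ω t - gMulti L h m ω' t|
      ≤ ∫ t in Icc (0 : ℝ) 1, (A + ∑ i with ω i ≠ ω' i, K i t) :=
        setIntegral_mono_on
          ((continuous_gMulti ω L h).sub (continuous_gMulti ω' L h)).abs.integrableOn_Icc
          ((integrable_const A).add hK)
          measurableSet_Icc fun t _ => abs_gMulti_sub_le ω ω' hL t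
    _ = A + ∑ i with ω i ≠ ω' i, ∫ t in Icc (0 : ℝ) 1, K i t := by
        rw [integral_add (integrable_const A) hK, integral_const,
          integral_finsetSum _ fun i _ => (integrable_triK_comp_sub hL _).integrableOn]
        simp [K]
    _ ≤ A + ∑ i with ω i ≠ ω' i, L * h ^ 2 := by
        gcongr with i
        exact setIntegral_triK_comp_sub_le hL hh _ _
    _ = (|(wOne ω : ℝ) - wOne ω'| + hamDist ω ω') * (L * h ^ 2) := by
        simp only [A, hamDist, Finset.sum_const, nsmul_eq_mul]
        ring

end MultiTriangle

theorem tv_gMulti_le_general (m : ℕ) (ω ω' : Fin m → Bool)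
    (L h : ℝ) (hL : 0 < L) (hh : 0 < h) :
    (1 / 2) * (∫ t in Set.Icc (0 : ℝ) 1, |gMulti L h m ω t - gMulti L h m ω' t|)
        ≤ (1 / 2) * (|(wOne ω : ℝ) - (wOne ω' : ℝ)| + (hamDist ω ω' : ℝ)) * L * h ^ 2 ∧
      (1 / 2) * (|(wOne ω : ℝ) - (wOne ω' : ℝ)| + (hamDist ω ω' : ℝ)) * L * h ^ 2
        ≤ (m : ℝ) * L * h ^ 2 := by
  refine ⟨?_, ?_⟩
  · have hint := integral_abs_gMulti_sub_le ω ω' hL.le hh.le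
    linarith
  · have hw : |(wOne ω : ℝ) - wOne ω'| ≤ m := abs_sub_le_of_nonneg_of_le (by positivity)
      (mod_cast wOne_le ω) (by positivity) (mod_cast wOne_le ω')
    have hd : (hamDist ω ω' : ℝ) ≤ m := mod_cast hamDist_le ω ω'
    gcongr
    linarith

/-- Total variation bound between multi-triangle densities: `TV = (1/2)∫|g - g'|`
is at most `(1/2)(|‖ω‖₁ - ‖ω'‖₁| + d_H(ω,ω')) L h²`, itself at most `m L h²`. -/
theorem tv_gMulti_le (m : ℕ) (hm : 1 ≤ m) (ω ω' : Fin m → Bool)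
    (L h : ℝ) (hL : 0 < L) (hh : 0 < h) (hh2 : h ≤ 1 / (2 * ((m : ℝ) + 1)))
    (hval : (wOne ω : ℝ) * L * h ^ 2 ≤ 1) (hval' : (wOne ω' : ℝ) * L * h ^ 2 ≤ 1) :
    (1 / 2) * (∫ t in Set.Icc (0 : ℝ) 1, |gMulti L h m ω t - gMulti L h m ω' t|)
        ≤ (1 / 2) * (|(wOne ω : ℝ) - (wOne ω' : ℝ)| + (hamDist ω ω' : ℝ)) * L * h ^ 2 ∧
      (1 / 2) * (|(wOne ω : ℝ) - (wOne ω' : ℝ)| + (hamDist ω ω' : ℝ)) * L * h ^ 2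
        ≤ (m : ℝ) * L * h ^ 2 :=
  tv_gMulti_le_general m ω ω' L h hL hh
end

section
/- Let K : ℝ → [0,∞) be a C^∞ function supported in (-1/2, 1/2) with ∫(K^{(β)})² ≤ 1. For m ≥ 1, ω ∈ {0,1}^m, L > 0 and h > 0 with h < 1/(m+1), m L h^{β+1}∫K ≤ 1 and m h ≤ 1, the function g_{L,β,ω,h}(x) := 1 - ‖ω‖₁ L h^{β+1}∫K + L h^β Σᵢ ωᵢ K((x - i/(m+1))/h) is a probability density in the periodic Sobolev class of smoothness β and radius L: it is C^β, its (β-1)-st derivative is absolutely continuous, ∫₀¹ (g^{(β)})² ≤ L², ∫₀¹ g = 1, and g^{(j)}(0) = g^{(j)}(1) for 0 ≤ j ≤ β - 1. -/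
open MeasureTheory Set

/-- The smooth bump perturbation of the uniform density built from a kernel `K`. -/
noncomputable def gSmooth (K : ℝ → ℝ) (L h : ℝ) (β m : ℕ) (ω : Fin m → Bool) (x : ℝ) : ℝ :=
  1 - (wOne ω : ℝ) * L * h ^ (β + 1) * (∫ t, K t) +
    L * h ^ β * ∑ i : Fin m, (if ω i then (1 : ℝ) else 0) *
      K ((x - ((i : ℕ) + 1) / ((m : ℕ) + 1)) / h)


lemma myIteratedDeriv_const (n : ℕ) (c : ℝ) (x : ℝ) :
    iteratedDeriv n (fun _ : ℝ => c) x = if n = 0 then c else 0 := by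
  rcases n with _ | n
  · simp
  · rw [iteratedDeriv_eq_iteratedFDeriv, iteratedFDeriv_const_of_ne (Nat.succ_ne_zero n)]
    simp

lemma myIteratedDeriv_const_add {n : ℕ} (hn : 0 < n) (c : ℝ) (f : ℝ → ℝ) (x : ℝ) :
    iteratedDeriv n (fun z => c + f z) x = iteratedDeriv n f x := by
  simp only [← iteratedDerivWithin_univ]
  exact iteratedDerivWithin_const_add hn c

lemma myIteratedDeriv_const_mul {n : ℕ} {f : ℝ → ℝ} (hf : ContDiff ℝ (⊤ : ℕ∞) f) (c : ℝ) (x : ℝ) :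
    iteratedDeriv n (fun z => c * f z) x = c * iteratedDeriv n f x := by
  simp only [← iteratedDerivWithin_univ]
  exact iteratedDerivWithin_const_mul (Set.mem_univ x) uniqueDiffOn_univ c
    ((hf.of_le (by exact_mod_cast le_top)).contDiffWithinAt)

lemma myIteratedDeriv_add {n : ℕ} {f g : ℝ → ℝ} (hf : ContDiff ℝ (⊤ : ℕ∞) f) (hg : ContDiff ℝ (⊤ : ℕ∞) g)
    (x : ℝ) :
    iteratedDeriv n (fun z => f z + g z) x = iteratedDeriv n f x + iteratedDeriv n g x := by
  simp only [← iteratedDerivWithin_univ]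
  exact iteratedDerivWithin_add (Set.mem_univ x) uniqueDiffOn_univ
    ((hf.of_le (by exact_mod_cast le_top)).contDiffWithinAt) ((hg.of_le (by exact_mod_cast le_top)).contDiffWithinAt)

lemma myIteratedDeriv_sum {ι : Type*} (s : Finset ι) (f : ι → ℝ → ℝ)
    (hf : ∀ i ∈ s, ContDiff ℝ (⊤ : ℕ∞) (f i)) (n : ℕ) (x : ℝ) :
    iteratedDeriv n (fun y => ∑ i ∈ s, f i y) x = ∑ i ∈ s, iteratedDeriv n (f i) x := by
  classical
  induction s using Finset.cons_induction with
  | empty => simp [myIteratedDeriv_const]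
  | cons a s ha ih =>
    simp only [Finset.sum_cons]
    rw [myIteratedDeriv_add (hf a (Finset.mem_cons_self a s))
      (ContDiff.sum fun i hi => hf i (Finset.mem_cons_of_mem hi)) x,
      ih fun i hi => hf i (Finset.mem_cons_of_mem hi)]

lemma myIteratedDeriv_comp (n : ℕ) {f : ℝ → ℝ} (hf : ContDiff ℝ (⊤ : ℕ∞) f) (c h : ℝ) :
    iteratedDeriv n (fun x => f ((x - c) / h))
      = fun x => (1 / h) ^ n * iteratedDeriv n f ((x - c) / h) := by
  have step1 : (fun x : ℝ => f ((x - c) / h)) = fun z => f (1 / h * (z + -c)) := by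
    funext x; congr 1; ring
  have step2 := iteratedDeriv_comp_add_const n (fun y => f (1 / h * y)) (-c)
  have step3 := iteratedDeriv_comp_const_mul (n := n) (hf.of_le (by exact_mod_cast le_top)) (1 / h)
  rw [step1, step2]
  funext t
  simp only [step3]
  have : 1 / h * (t + -c) = (t - c) / h := by ring
  rw [this]

lemma mySqSum {ι : Type*} (s : Finset ι) (t : ι → ℝ)
    (hd : ∀ i ∈ s, ∀ j ∈ s, t i ≠ 0 → t j ≠ 0 → i = j) :
    (∑ i ∈ s, t i) ^ 2 ≤ ∑ i ∈ s, (t i) ^ 2 := by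
  classical
  by_cases hz : ∀ i ∈ s, t i = 0
  · rw [Finset.sum_eq_zero hz]
    simpa using Finset.sum_nonneg fun i _ => sq_nonneg (t i)
  · push_neg at hz
    obtain ⟨i₀, hi₀, hne⟩ := hz
    have hsum : ∑ i ∈ s, t i = t i₀ :=
      Finset.sum_eq_single_of_mem i₀ hi₀ fun j hj hji => by
        by_contra h0
        exact hji (hd j hj i₀ hi₀ h0 hne)
    rw [hsum]
    exact Finset.single_le_sum (fun i _ => sq_nonneg (t i)) hi₀

/-- If `f` vanishes off `Icc (-1/2) (1/2)` then `x ↦ f ((x-c)/h)` vanishes off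
`Icc (c - h/2) (c + h/2)`. -/
lemma myBumpSupp {f : ℝ → ℝ} (h0 : ∀ y, y ∉ Set.Icc (-(1 / 2) : ℝ) (1 / 2) → f y = 0)
    {h : ℝ} (hh : 0 < h) (c : ℝ) :
    ∀ x, x ∉ Set.Icc (c - h / 2) (c + h / 2) → f ((x - c) / h) = 0 := by
  intro x hx
  apply h0
  intro hmem
  apply hx
  obtain ⟨h1, h2⟩ := hmem
  rw [le_div_iff₀ hh] at h1
  rw [div_le_iff₀ hh] at h2
  constructor <;> nlinarith

lemma myIntegralComp (f : ℝ → ℝ) {h : ℝ} (hh : 0 < h) (c : ℝ) :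
    (∫ x, f ((x - c) / h)) = h * ∫ y, f y := by
  have := integral_sub_right_eq_self (μ := volume) (fun y => f (y / h)) c
  rw [this, MeasureTheory.Measure.integral_comp_div f h, abs_of_pos hh, smul_eq_mul]


open scoped Topology

/-- `g_{L,β,ω,h}` is a probability density in the periodic Sobolev class of
smoothness `β` and radius `L`: it is `C^β`, nonnegative, integrates to `1` on
`[0,1]`, its `β`-th derivative has energy at most `L²`, and its derivatives of
order `< β` agree at `0` and `1`. -/
theorem gSmooth_mem_periodic_sobolev (β : ℕ) (hβ : 1 ≤ β)
    (K : ℝ → ℝ) (hK : ContDiff ℝ (⊤ : ℕ∞) K) (hK0 : ∀ x, 0 ≤ K x)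
    (hsupp : ∀ x, x ∉ Set.Ioo (-(1 / 2) : ℝ) (1 / 2) → K x = 0)
    (hKd : (∫ x, (iteratedDeriv β K x) ^ 2) ≤ 1)
    (m : ℕ) (hm : 1 ≤ m) (ω : Fin m → Bool) (L h : ℝ) (hL : 0 < L) (hh : 0 < h)
    (hh1 : h < 1 / ((m : ℝ) + 1))
    (hpos : (m : ℝ) * L * h ^ (β + 1) * (∫ t, K t) ≤ 1)
    (hmh : (m : ℝ) * h ≤ 1) :
    ContDiff ℝ (β : ℕ∞) (gSmooth K L h β m ω) ∧
    (∀ x ∈ Set.Icc (0 : ℝ) 1, 0 ≤ gSmooth K L h β m ω x) ∧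
    (∫ x in Set.Icc (0 : ℝ) 1, gSmooth K L h β m ω x) = 1 ∧
    (∫ x in Set.Icc (0 : ℝ) 1, (iteratedDeriv β (gSmooth K L h β m ω) x) ^ 2) ≤ L ^ 2 ∧
    (∀ j < β, iteratedDeriv j (gSmooth K L h β m ω) 0
      = iteratedDeriv j (gSmooth K L h β m ω) 1) := by
  have hm1 : (0 : ℝ) < (m : ℝ) + 1 := by positivity
  have hhne : h ≠ 0 := ne_of_gt hh
  obtain ⟨C0, hC0⟩ : ∃ C0 : ℝ, C0 = 1 - (wOne ω : ℝ) * L * h ^ (β + 1) * (∫ t, K t) := ⟨_, rfl⟩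
  obtain ⟨c, hc⟩ : ∃ c : Fin m → ℝ,
      c = fun i : Fin m => (((i : ℕ) : ℝ) + 1) / (((m : ℕ) : ℝ) + 1) := ⟨_, rfl⟩
  obtain ⟨a, ha⟩ : ∃ a : Fin m → ℝ, a = fun i : Fin m => if ω i then (1 : ℝ) else 0 := ⟨_, rfl⟩
  have hgdef : gSmooth K L h β m ω
      = fun x => C0 + L * h ^ β * ∑ i : Fin m, a i * K ((x - c i) / h) := by
    subst hC0 hc ha; rfl
  -- basic positivity facts
  have hIK : 0 ≤ ∫ t, K t := integral_nonneg hK0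
  have ha01 : ∀ i, a i = 0 ∨ a i = 1 := by
    intro i; rw [ha]; dsimp only; split
    · right; rfl
    · left; rfl
  have ha0 : ∀ i, 0 ≤ a i := by intro i; rcases ha01 i with h' | h' <;> rw [h'] <;> norm_num
  have ha1 : ∀ i, a i ≤ 1 := by intro i; rcases ha01 i with h' | h' <;> rw [h'] <;> norm_num
  -- bounds on centers
  have hclb : ∀ i : Fin m, 1 / ((m : ℝ) + 1) ≤ c i := by
    intro i; rw [hc]; dsimp only
    gcongr
    have : (0:ℝ) ≤ ((i : ℕ) : ℝ) := Nat.cast_nonneg _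
    linarith
  have hcub : ∀ i : Fin m, c i ≤ (m : ℝ) / ((m : ℝ) + 1) := by
    intro i; rw [hc]; dsimp only
    gcongr
    have : ((i : ℕ) : ℝ) + 1 ≤ (m : ℝ) := by
      have := i.isLt
      exact_mod_cast Nat.succ_le_of_lt this
    linarith
  have hkey : (m : ℝ) / ((m : ℝ) + 1) + h / 2 < 1 := by
    have h2 : (m : ℝ) / ((m : ℝ) + 1) + (1 / ((m : ℝ) + 1)) / 2 = ((m : ℝ) + 1 / 2) / ((m : ℝ) + 1) := by
      field_simp
    have h3 : ((m : ℝ) + 1 / 2) / ((m : ℝ) + 1) < 1 := by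
      rw [div_lt_one hm1]; linarith
    linarith
  have hlb0 : ∀ i : Fin m, 0 < c i - h / 2 := by
    intro i; have := hclb i; linarith
  have hub1 : ∀ i : Fin m, c i + h / 2 < 1 := by
    intro i; have := hcub i; linarith
  -- support and integrability of K
  have hKzero : ∀ y, y ∉ Set.Icc (-(1 / 2) : ℝ) (1 / 2) → K y = 0 :=
    fun y hy => hsupp y fun hy' => hy (Set.Ioo_subset_Icc_self hy')
  have hKcs : HasCompactSupport K := HasCompactSupport.intro isCompact_Icc hKzero
  have hKint : Integrable K := hK.continuous.integrable_of_hasCompactSupport hKcs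
  -- smoothness
  have hb : ∀ i : Fin m, ContDiff ℝ (⊤ : ℕ∞) fun x : ℝ => K ((x - c i) / h) := by
    intro i
    exact hK.comp ((contDiff_id.sub contDiff_const).div_const h)
  have hterm_smooth : ∀ i : Fin m, ContDiff ℝ (⊤ : ℕ∞) fun x : ℝ => a i * K ((x - c i) / h) :=
    fun i => contDiff_const.mul (hb i)
  have hS : ContDiff ℝ (⊤ : ℕ∞) fun x : ℝ => ∑ i : Fin m, a i * K ((x - c i) / h) :=
    ContDiff.sum fun i _ => hterm_smooth i
  have hgsmooth : ContDiff ℝ (⊤ : ℕ∞) (gSmooth K L h β m ω) := by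
    rw [hgdef]; exact contDiff_const.add (contDiff_const.mul hS)
  refine ⟨hgsmooth.of_le (by exact_mod_cast le_top), ?_, ?_, ?_, ?_⟩
  · -- nonnegativity
    have hwm : (wOne ω : ℝ) ≤ (m : ℝ) := by
      have : wOne ω ≤ m := by
        unfold wOne
        exact (Finset.card_filter_le _ _).trans_eq (by simp)
      exact_mod_cast this
    have hC0nn : 0 ≤ C0 := by
      have h1 : (wOne ω : ℝ) * L * h ^ (β + 1) * (∫ t, K t)
          ≤ (m : ℝ) * L * h ^ (β + 1) * (∫ t, K t) := by
        apply mul_le_mul_of_nonneg_right _ hIK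
        apply mul_le_mul_of_nonneg_right _ (by positivity)
        exact mul_le_mul_of_nonneg_right hwm hL.le
      rw [hC0]; linarith
    intro x _
    rw [hgdef]
    have hsumnn : 0 ≤ ∑ i : Fin m, a i * K ((x - c i) / h) :=
      Finset.sum_nonneg fun i _ => mul_nonneg (ha0 i) (hK0 _)
    have : 0 ≤ L * h ^ β := by positivity
    dsimp only
    nlinarith
  · -- integral equals one
    have hbumpzero : ∀ i : Fin m, ∀ x ∉ Set.Icc (c i - h / 2) (c i + h / 2),
        K ((x - c i) / h) = 0 := fun i => myBumpSupp hKzero hh (c i)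
    have hbump_int : ∀ i : Fin m, Integrable fun x : ℝ => K ((x - c i) / h) := fun i =>
      (hb i).continuous.integrable_of_hasCompactSupport
        (HasCompactSupport.intro isCompact_Icc (hbumpzero i))
    have hbump_setint : ∀ i : Fin m,
        (∫ x in Set.Icc (0 : ℝ) 1, K ((x - c i) / h)) = h * ∫ t, K t := by
      intro i
      rw [setIntegral_eq_integral_of_forall_compl_eq_zero
        (fun x hx => hbumpzero i x fun hmem =>
          hx (Set.mem_Icc.mpr ⟨le_trans (hlb0 i).le (by linarith [hmem.1]), le_trans hmem.2 (hub1 i).le⟩)),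
        myIntegralComp K hh]
    have hSint : Integrable fun x : ℝ => ∑ i : Fin m, a i * K ((x - c i) / h) :=
      integrable_finset_sum _ fun i _ => (hbump_int i).const_mul (a i)
    have hsum_a : ∑ i : Fin m, a i = (wOne ω : ℝ) := by
      rw [ha]; simp [wOne, Finset.sum_boole]
    rw [hgdef]
    rw [MeasureTheory.integral_add ((integrableOn_const (C := C0) (s := Set.Icc (0 : ℝ) 1) (μ := volume) (by simp [Real.volume_Icc]) :
        IntegrableOn (fun _ => C0) (Set.Icc (0 : ℝ) 1) volume))
      ((hSint.integrableOn).const_mul _)]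
    rw [MeasureTheory.integral_const_mul]
    rw [MeasureTheory.integral_finset_sum _ fun i _ => ((hbump_int i).const_mul (a i)).integrableOn]
    have hterm : ∀ i : Fin m,
        (∫ x in Set.Icc (0 : ℝ) 1, a i * K ((x - c i) / h)) = a i * (h * ∫ t, K t) := by
      intro i
      rw [MeasureTheory.integral_const_mul, hbump_setint i]
    simp only [hterm]
    rw [← Finset.sum_mul, hsum_a]
    have hvol : ∫ _x in Set.Icc (0 : ℝ) 1, C0 = C0 := by
      simp [Real.volume_Icc]
    rw [hvol, hC0]
    ring
  · -- energy bound
    have hKβcont : Continuous (iteratedDeriv β K) := hK.continuous_iteratedDeriv β (by exact_mod_cast le_top)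
    have hKβzero : ∀ y, y ∉ Set.Icc (-(1 / 2) : ℝ) (1 / 2) → iteratedDeriv β K y = 0 := by
      intro y hy
      have hopen : IsOpen (Set.Icc (-(1 / 2) : ℝ) (1 / 2))ᶜ := isClosed_Icc.isOpen_compl
      have hev : K =ᶠ[𝓝 y] fun _ => (0 : ℝ) := by
        filter_upwards [hopen.mem_nhds hy] with z hz
        exact hKzero z hz
      rw [hev.iteratedDeriv_eq β, myIteratedDeriv_const]
      simp
    -- the β-th derivative of g
    have hgd : ∀ x, iteratedDeriv β (gSmooth K L h β m ω) x
        = L * ∑ i : Fin m, a i * iteratedDeriv β K ((x - c i) / h) := by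
      intro x
      rw [hgdef]
      rw [myIteratedDeriv_const_add hβ C0 _ x]
      rw [myIteratedDeriv_const_mul hS (L * h ^ β) x]
      rw [myIteratedDeriv_sum Finset.univ _ (fun i _ => hterm_smooth i) β x]
      have hterm : ∀ i : Fin m, iteratedDeriv β (fun y => a i * K ((y - c i) / h)) x
          = a i * ((1 / h) ^ β * iteratedDeriv β K ((x - c i) / h)) := by
        intro i
        rw [myIteratedDeriv_const_mul (hb i) (a i) x, myIteratedDeriv_comp β hK (c i) h]
      simp only [hterm]
      rw [Finset.mul_sum, Finset.mul_sum]
      refine Finset.sum_congr rfl fun i _ => ?_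
      have hp : h ^ β * (1 / h) ^ β = 1 := by rw [← mul_pow, mul_one_div_cancel hhne, one_pow]
      linear_combination (L * a i * iteratedDeriv β K ((x - c i) / h)) * hp
    have hsq_zero : ∀ y, y ∉ Set.Icc (-(1 / 2) : ℝ) (1 / 2) → (iteratedDeriv β K y) ^ 2 = 0 :=
      fun y hy => by rw [hKβzero y hy]; ring
    have hsqb_cont : ∀ i : Fin m, Continuous fun x : ℝ => (iteratedDeriv β K ((x - c i) / h)) ^ 2 :=
      fun i => (hKβcont.comp ((continuous_id.sub continuous_const).div_const h)).pow 2
    have hsqb_int : ∀ i : Fin m, Integrable fun x : ℝ => (iteratedDeriv β K ((x - c i) / h)) ^ 2 :=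
      fun i => (hsqb_cont i).integrable_of_hasCompactSupport
        (HasCompactSupport.intro isCompact_Icc
          (myBumpSupp (f := fun y => (iteratedDeriv β K y) ^ 2) hsq_zero hh (c i)))
    have hsqb_integral : ∀ i : Fin m,
        (∫ x, (iteratedDeriv β K ((x - c i) / h)) ^ 2) = h * ∫ y, (iteratedDeriv β K y) ^ 2 :=
      fun i => myIntegralComp (fun y => (iteratedDeriv β K y) ^ 2) hh (c i)
    have hI0 : 0 ≤ ∫ y, (iteratedDeriv β K y) ^ 2 := integral_nonneg fun y => sq_nonneg _
    -- pointwise bound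
    have hptwise : ∀ x, (iteratedDeriv β (gSmooth K L h β m ω) x) ^ 2
        ≤ L ^ 2 * ∑ i : Fin m, (iteratedDeriv β K ((x - c i) / h)) ^ 2 := by
      intro x
      rw [hgd x, mul_pow]
      apply mul_le_mul_of_nonneg_left _ (sq_nonneg L)
      have hdisj : ∀ i ∈ Finset.univ, ∀ j ∈ (Finset.univ : Finset (Fin m)),
          a i * iteratedDeriv β K ((x - c i) / h) ≠ 0 →
          a j * iteratedDeriv β K ((x - c j) / h) ≠ 0 → i = j := by
        intro i _ j _ hi hj
        by_contra hij
        have hKi : iteratedDeriv β K ((x - c i) / h) ≠ 0 := fun h0 => hi (by rw [h0, mul_zero])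
        have hKj : iteratedDeriv β K ((x - c j) / h) ≠ 0 := fun h0 => hj (by rw [h0, mul_zero])
        have hxi : x ∈ Set.Icc (c i - h / 2) (c i + h / 2) := by
          by_contra hx
          exact hKi (myBumpSupp hKβzero hh (c i) x hx)
        have hxj : x ∈ Set.Icc (c j - h / 2) (c j + h / 2) := by
          by_contra hx
          exact hKj (myBumpSupp hKβzero hh (c j) x hx)
        have hne2 : (i : ℕ) ≠ (j : ℕ) := fun H => hij (Fin.val_injective H)
        have h1 : (1 : ℝ) ≤ |((i : ℕ) : ℝ) - ((j : ℕ) : ℝ)| := by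
          have h1' : ((i : ℕ) : ℤ) - ((j : ℕ) : ℤ) ≠ 0 :=
            sub_ne_zero.mpr (by exact_mod_cast hne2)
          have := Int.one_le_abs h1'
          exact_mod_cast this
        have hcc : c i - c j = (((i : ℕ) : ℝ) - ((j : ℕ) : ℝ)) / ((m : ℝ) + 1) := by
          rw [hc]; dsimp only; ring
        have habs : |c i - c j| ≤ h := by
          rw [abs_sub_le_iff]
          obtain ⟨hxi1, hxi2⟩ := hxi
          obtain ⟨hxj1, hxj2⟩ := hxj
          constructor <;> linarith
        have hlow : 1 / ((m : ℝ) + 1) ≤ |c i - c j| := by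
          rw [hcc, abs_div, abs_of_pos hm1]
          gcongr
        linarith
      calc (∑ i : Fin m, a i * iteratedDeriv β K ((x - c i) / h)) ^ 2
          ≤ ∑ i : Fin m, (a i * iteratedDeriv β K ((x - c i) / h)) ^ 2 :=
            mySqSum Finset.univ _ hdisj
        _ ≤ ∑ i : Fin m, (iteratedDeriv β K ((x - c i) / h)) ^ 2 := by
            refine Finset.sum_le_sum fun i _ => ?_
            rcases ha01 i with h' | h' <;> rw [h']
            · simpa using sq_nonneg (iteratedDeriv β K ((x - c i) / h))
            · rw [one_mul]
    -- integrate
    have hgcont : Continuous (iteratedDeriv β (gSmooth K L h β m ω)) :=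
      hgsmooth.continuous_iteratedDeriv β (by exact_mod_cast le_top)
    have hBcont : Continuous fun x : ℝ =>
        L ^ 2 * ∑ i : Fin m, (iteratedDeriv β K ((x - c i) / h)) ^ 2 :=
      continuous_const.mul (continuous_finset_sum _ fun i _ => hsqb_cont i)
    have hBint : Integrable fun x : ℝ =>
        L ^ 2 * ∑ i : Fin m, (iteratedDeriv β K ((x - c i) / h)) ^ 2 :=
      (integrable_finset_sum _ fun i _ => hsqb_int i).const_mul (L ^ 2)
    calc (∫ x in Set.Icc (0 : ℝ) 1, (iteratedDeriv β (gSmooth K L h β m ω) x) ^ 2)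
        ≤ ∫ x in Set.Icc (0 : ℝ) 1,
            L ^ 2 * ∑ i : Fin m, (iteratedDeriv β K ((x - c i) / h)) ^ 2 :=
          setIntegral_mono_on ((hgcont.pow 2).integrableOn_Icc) hBcont.integrableOn_Icc
            measurableSet_Icc fun x _ => hptwise x
      _ ≤ ∫ x, L ^ 2 * ∑ i : Fin m, (iteratedDeriv β K ((x - c i) / h)) ^ 2 :=
          setIntegral_le_integral hBint (Filter.Eventually.of_forall fun x => by positivity)
      _ = L ^ 2 * ∑ _i : Fin m, (h * ∫ y, (iteratedDeriv β K y) ^ 2) := by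
          rw [MeasureTheory.integral_const_mul,
            MeasureTheory.integral_finset_sum _ fun i _ => hsqb_int i]
          simp only [hsqb_integral]
      _ ≤ L ^ 2 := by
          rw [Finset.sum_const, Finset.card_univ, Fintype.card_fin, nsmul_eq_mul]
          have hfin : (m : ℝ) * (h * ∫ y, (iteratedDeriv β K y) ^ 2) ≤ 1 := by
            have hmnn : (0 : ℝ) ≤ (m : ℝ) := Nat.cast_nonneg m
            nlinarith
          nlinarith [sq_nonneg L]
  · -- periodicity
    have hnear0 : gSmooth K L h β m ω =ᶠ[𝓝 (0 : ℝ)] fun _ => C0 := by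
      have hδ : (0 : ℝ) < 1 / ((m : ℝ) + 1) - h / 2 := by linarith
      filter_upwards [Iio_mem_nhds hδ] with x hx
      rw [hgdef]
      have hz : ∀ i : Fin m, K ((x - c i) / h) = 0 := by
        intro i
        apply hsupp
        intro hmem
        have h2 : -(1 / 2) < (x - c i) / h := hmem.1
        rw [lt_div_iff₀ hh] at h2
        have := hclb i
        have hx' : x < 1 / ((m : ℝ) + 1) - h / 2 := hx
        linarith
      dsimp only
      rw [Finset.sum_eq_zero fun i _ => by rw [hz i, mul_zero]]
      ring
    have hnear1 : gSmooth K L h β m ω =ᶠ[𝓝 (1 : ℝ)] fun _ => C0 := by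
      filter_upwards [Ioi_mem_nhds hkey] with x hx
      rw [hgdef]
      have hz : ∀ i : Fin m, K ((x - c i) / h) = 0 := by
        intro i
        apply hsupp
        intro hmem
        have h2 : (x - c i) / h < 1 / 2 := hmem.2
        rw [div_lt_iff₀ hh] at h2
        have := hcub i
        have hx' : (m : ℝ) / ((m : ℝ) + 1) + h / 2 < x := hx
        linarith
      dsimp only
      rw [Finset.sum_eq_zero fun i _ => by rw [hz i, mul_zero]]
      ring
    intro j _
    rw [hnear0.iteratedDeriv_eq j, hnear1.iteratedDeriv_eq j,
      myIteratedDeriv_const, myIteratedDeriv_const]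
end

section
/- For the smooth bump densities g_{L,β,ω,h} and g_{L,β,ω',h} (ω, ω' ∈ {0,1}^m, disjoint bump supports, valid density conditions), the squared L² distance satisfies ∫₀¹ (g_{L,β,ω,h} - g_{L,β,ω',h})² ≥ d_H(ω,ω') L² h^{2β+1} (∫K² - 2 m h (∫K)²), and the total variation distance satisfies TV ≤ m L h^{β+1} ∫K. -/
open MeasureTheory Set

set_option maxHeartbeats 1000000 in
/-- Separation and closeness of the smooth bump densities: the squared `L²`
distance is at least `d_H(ω,ω') L² h^{2β+1} (∫K² - 2 m h (∫K)²)`, while the total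
variation distance `(1/2)∫|g_ω - g_ω'|` is at most `m L h^{β+1} ∫K`. -/
theorem gSmooth_l2_ge_and_tv_le (β : ℕ) (hβ : 1 ≤ β)
    (K : ℝ → ℝ) (hK : ContDiff ℝ (⊤ : ℕ∞) K) (hK0 : ∀ x, 0 ≤ K x)
    (hsupp : ∀ x, x ∉ Set.Ioo (-(1 / 2) : ℝ) (1 / 2) → K x = 0)
    (hKd : (∫ x, (iteratedDeriv β K x) ^ 2) ≤ 1)
    (m : ℕ) (hm : 1 ≤ m) (ω ω' : Fin m → Bool) (L h : ℝ) (hL : 0 < L) (hh : 0 < h)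
    (hh1 : h < 1 / ((m : ℝ) + 1))
    (hpos : (m : ℝ) * L * h ^ (β + 1) * (∫ t, K t) ≤ 1)
    (hmh : (m : ℝ) * h ≤ 1) :
    (∫ x in Set.Icc (0 : ℝ) 1,
        (gSmooth K L h β m ω x - gSmooth K L h β m ω' x) ^ 2)
      ≥ (hamDist ω ω' : ℝ) * L ^ 2 * h ^ (2 * β + 1) *
          ((∫ t, K t ^ 2) - 2 * (m : ℝ) * h * (∫ t, K t) ^ 2) ∧
    (1 / 2) * (∫ x in Set.Icc (0 : ℝ) 1,
        |gSmooth K L h β m ω x - gSmooth K L h β m ω' x|)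
      ≤ (m : ℝ) * L * h ^ (β + 1) * (∫ t, K t) := by
  classical
  have hKcont : Continuous K := hK.continuous
  set KI : ℝ := ∫ t, K t with hKIdef
  set KI2 : ℝ := ∫ t, K t ^ 2 with hKI2def
  have hKI0 : 0 ≤ KI := integral_nonneg hK0
  have hm1 : (0 : ℝ) < (m : ℝ) + 1 := by positivity
  set c : Fin m → ℝ := fun i => (((i : ℕ) : ℝ) + 1) / ((m : ℝ) + 1) with hc
  set d : Fin m → ℝ := fun i =>
    (if ω i then (1 : ℝ) else 0) - (if ω' i then (1 : ℝ) else 0) with hd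
  set S1 : ℝ := (wOne ω : ℝ) - (wOne ω' : ℝ) with hS1
  set dH : ℝ := (hamDist ω ω' : ℝ) with hdHdef
  have hdH0 : 0 ≤ dH := by rw [hdHdef]; positivity
  -- support of the bumps
  have hfsupp : ∀ (i : Fin m) (x : ℝ), K ((x - c i) / h) ≠ 0 →
      x ∈ Set.Ioo (c i - h / 2) (c i + h / 2) := by
    intro i x hx
    have hmem : (x - c i) / h ∈ Set.Ioo (-(1 / 2) : ℝ) (1 / 2) := by
      by_contra hcon; exact hx (hsupp _ hcon)
    rw [Set.mem_Ioo] at hmem ⊢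
    obtain ⟨h1, h2⟩ := hmem
    rw [lt_div_iff₀ hh] at h1
    rw [div_lt_iff₀ hh] at h2
    constructor <;> nlinarith
  have hci1 : ∀ i : Fin m, 1 / ((m : ℝ) + 1) ≤ c i := by
    intro i
    rw [hc]
    refine (div_le_div_iff_of_pos_right hm1).mpr ?_
    have : (0 : ℝ) ≤ ((i : ℕ) : ℝ) := Nat.cast_nonneg _
    linarith
  have hci2 : ∀ i : Fin m, c i ≤ (m : ℝ) / ((m : ℝ) + 1) := by
    intro i
    rw [hc]
    refine (div_le_div_iff_of_pos_right hm1).mpr ?_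
    exact_mod_cast Nat.succ_le_of_lt i.isLt
  have hu : (1 / ((m : ℝ) + 1)) * ((m : ℝ) + 1) = 1 := by field_simp
  have hmu : (m : ℝ) / ((m : ℝ) + 1) + 1 / ((m : ℝ) + 1) = 1 := by field_simp
  have hu0 : (0 : ℝ) < 1 / ((m : ℝ) + 1) := by positivity
  have hsub : ∀ (i : Fin m) (x : ℝ), K ((x - c i) / h) ≠ 0 →
      x ∈ Set.Icc (0 : ℝ) 1 := by
    intro i x hx
    obtain ⟨h1, h2⟩ := hfsupp i x hx
    have hi1 := hci1 i
    have hi2 := hci2 i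
    constructor <;> nlinarith
  -- disjointness of bumps
  have hdisj : ∀ (i j : Fin m), i ≠ j → ∀ x : ℝ,
      K ((x - c i) / h) * K ((x - c j) / h) = 0 := by
    intro i j hij x
    by_contra hcon
    have hi : K ((x - c i) / h) ≠ 0 := fun h0 => hcon (by rw [h0]; ring)
    have hj : K ((x - c j) / h) ≠ 0 := fun h0 => hcon (by rw [h0]; ring)
    obtain ⟨hi1, hi2⟩ := hfsupp i x hi
    obtain ⟨hj1, hj2⟩ := hfsupp j x hj
    have hij' : (1 : ℝ) ≤ |((i : ℕ) : ℝ) - ((j : ℕ) : ℝ)| := by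
      have hne : ((i : ℕ) : ℤ) ≠ ((j : ℕ) : ℤ) := by
        intro hcontra
        exact hij (Fin.ext (by exact_mod_cast hcontra))
      have h1 : (1 : ℤ) ≤ |((i : ℕ) : ℤ) - ((j : ℕ) : ℤ)| :=
        Int.one_le_abs (sub_ne_zero.mpr hne)
      calc (1 : ℝ) = ((1 : ℤ) : ℝ) := by norm_num
        _ ≤ ((|((i : ℕ) : ℤ) - ((j : ℕ) : ℤ)| : ℤ) : ℝ) := by exact_mod_cast h1
        _ = |((i : ℕ) : ℝ) - ((j : ℕ) : ℝ)| := by push_cast; ring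
    have hcc : 1 / ((m : ℝ) + 1) ≤ |c i - c j| := by
      have hceq : c i - c j = (((i : ℕ) : ℝ) - ((j : ℕ) : ℝ)) / ((m : ℝ) + 1) := by
        rw [hc]; ring
      rw [hceq, abs_div, abs_of_pos hm1]
      gcongr
    have habslt : |c i - c j| < h := by
      rw [abs_sub_lt_iff]
      constructor <;> linarith
    linarith
  -- the key change-of-variables computation
  have key : ∀ (g : ℝ → ℝ), Continuous g → (∀ x, K x = 0 → g x = 0) →
      ∀ i : Fin m, (∫ x in Set.Icc (0 : ℝ) 1, g ((x - c i) / h)) = h * ∫ t, g t := by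
    intro g hg hg0 i
    rw [setIntegral_eq_integral_of_forall_compl_eq_zero (fun x hx => ?_)]
    · have h1 : (∫ x : ℝ, g ((x - c i) / h)) = ∫ y : ℝ, g (y / h) :=
        integral_sub_right_eq_self (fun y => g (y / h)) (c i)
      rw [h1, MeasureTheory.Measure.integral_comp_div g h, abs_of_pos hh, smul_eq_mul]
    · by_contra hne
      exact hx (hsub i x fun hf0 => hne (hg0 _ hf0))
  have hIK : ∀ i : Fin m,
      (∫ x in Set.Icc (0 : ℝ) 1, K ((x - c i) / h)) = h * KI :=
    key K hKcont (fun x hx => hx)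
  have hIK2 : ∀ i : Fin m,
      (∫ x in Set.Icc (0 : ℝ) 1, K ((x - c i) / h) ^ 2) = h * KI2 :=
    key (fun t => K t ^ 2) (hKcont.pow 2) (fun x hx => by show K x ^ 2 = 0; rw [hx]; ring)
  -- continuity facts
  have hFicont : ∀ i : Fin m, Continuous fun x => K ((x - c i) / h) := fun i =>
    hKcont.comp ((continuous_id.sub continuous_const).div_const h)
  have hDcont : Continuous fun x => L * h ^ β * ∑ i : Fin m, d i * K ((x - c i) / h) :=
    continuous_const.mul (continuous_finset_sum _ fun i _ =>
      continuous_const.mul (hFicont i))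
  -- sums
  have hsum1 : ∑ i : Fin m, d i = S1 := by
    rw [hS1, hd, Finset.sum_sub_distrib]
    simp [wOne, Finset.sum_boole]
  have habsd : ∀ i, |d i| = (if ω i ≠ ω' i then (1 : ℝ) else 0) := by
    intro i; rw [hd]; cases hωi : ω i <;> cases hωi' : ω' i <;> simp [hωi, hωi']
  have hsqd : ∀ i, (d i) ^ 2 = (if ω i ≠ ω' i then (1 : ℝ) else 0) := by
    intro i; rw [hd]; cases hωi : ω i <;> cases hωi' : ω' i <;> simp [hωi, hωi']
  have hsumabs : ∑ i : Fin m, |d i| = dH := by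
    rw [hdHdef, Finset.sum_congr rfl fun i _ => habsd i, Finset.sum_boole]
    simp [hamDist]
  have hsumsq : ∑ i : Fin m, (d i) ^ 2 = dH := by
    rw [hdHdef, Finset.sum_congr rfl fun i _ => hsqd i, Finset.sum_boole]
    simp [hamDist]
  have hS1abs : |S1| ≤ dH := by
    rw [← hsum1, ← hsumabs]
    exact Finset.abs_sum_le_sum_abs _ _
  have hdHm : dH ≤ (m : ℝ) := by
    rw [hdHdef]
    have : hamDist ω ω' ≤ m := by
      calc hamDist ω ω' ≤ (Finset.univ : Finset (Fin m)).card :=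
            Finset.card_filter_le _ _
        _ = m := by simp
    exact_mod_cast this
  -- decomposition of the difference
  have hdecomp : ∀ x : ℝ, gSmooth K L h β m ω x - gSmooth K L h β m ω' x
      = -S1 * (L * h ^ (β + 1) * KI) +
        L * h ^ β * ∑ i : Fin m, d i * K ((x - c i) / h) := by
    intro x
    simp only [gSmooth, hd, hS1, hc, ← hKIdef, sub_mul, Finset.sum_sub_distrib]
    push_cast
    ring
  -- pointwise square of the bump sum
  have hptsq : ∀ x : ℝ, (∑ i : Fin m, d i * K ((x - c i) / h)) ^ 2
      = ∑ i : Fin m, (d i) ^ 2 * K ((x - c i) / h) ^ 2 := by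
    intro x
    rw [sq, Finset.sum_mul_sum]
    refine Finset.sum_congr rfl fun i _ => ?_
    rw [Finset.sum_eq_single i]
    · ring
    · intro j _ hji
      have h0 : K ((x - c i) / h) * K ((x - c j) / h) = 0 :=
        hdisj i j (fun hij' => hji hij'.symm) x
      calc d i * K ((x - c i) / h) * (d j * K ((x - c j) / h))
          = d i * d j * (K ((x - c i) / h) * K ((x - c j) / h)) := by ring
        _ = 0 := by rw [h0]; ring
    · intro hni; exact absurd (Finset.mem_univ i) hni
  -- integral of D
  have hID : (∫ x in Set.Icc (0 : ℝ) 1,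
      L * h ^ β * ∑ i : Fin m, d i * K ((x - c i) / h)) = S1 * (L * h ^ (β + 1) * KI) := by
    rw [MeasureTheory.integral_const_mul]
    rw [MeasureTheory.integral_finset_sum _
      (fun i _ => (show Continuous fun x => d i * K ((x - c i) / h) from
        continuous_const.mul (hFicont i)).integrableOn_Icc)]
    simp only [MeasureTheory.integral_const_mul, hIK]
    rw [← Finset.sum_mul, hsum1]
    ring
  -- integral of D²
  have hID2 : (∫ x in Set.Icc (0 : ℝ) 1,
      (L * h ^ β * ∑ i : Fin m, d i * K ((x - c i) / h)) ^ 2)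
      = dH * L ^ 2 * h ^ (2 * β + 1) * KI2 := by
    have hrw : ∀ x : ℝ, (L * h ^ β * ∑ i : Fin m, d i * K ((x - c i) / h)) ^ 2
        = ∑ i : Fin m, L ^ 2 * h ^ (2 * β) * (d i) ^ 2 * K ((x - c i) / h) ^ 2 := by
      intro x
      rw [mul_pow, mul_pow, hptsq x, Finset.mul_sum]
      refine Finset.sum_congr rfl fun i _ => ?_
      rw [← pow_mul]
      ring
    simp only [hrw]
    rw [MeasureTheory.integral_finset_sum _
      (fun i _ => (show Continuous fun x => L ^ 2 * h ^ (2 * β) * (d i) ^ 2 * K ((x - c i) / h) ^ 2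
        from continuous_const.mul ((hFicont i).pow 2)).integrableOn_Icc)]
    simp only [MeasureTheory.integral_const_mul, hIK2]
    rw [show ∑ i : Fin m, L ^ 2 * h ^ (2 * β) * (d i) ^ 2 * (h * KI2)
        = (∑ i : Fin m, (d i) ^ 2) * (L ^ 2 * h ^ (2 * β) * (h * KI2)) from by
      rw [Finset.sum_mul]; exact Finset.sum_congr rfl fun i _ => by ring]
    rw [hsumsq]
    ring
  -- main L² identity
  have hmain : (∫ x in Set.Icc (0 : ℝ) 1,
      (gSmooth K L h β m ω x - gSmooth K L h β m ω' x) ^ 2)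
      = dH * L ^ 2 * h ^ (2 * β + 1) * KI2 - S1 ^ 2 * (L * h ^ (β + 1) * KI) ^ 2 := by
    have hrw : ∀ x : ℝ, (gSmooth K L h β m ω x - gSmooth K L h β m ω' x) ^ 2
        = (-S1 * (L * h ^ (β + 1) * KI)) ^ 2 +
          (2 * (-S1 * (L * h ^ (β + 1) * KI))) *
            (L * h ^ β * ∑ i : Fin m, d i * K ((x - c i) / h)) +
          (L * h ^ β * ∑ i : Fin m, d i * K ((x - c i) / h)) ^ 2 := by
      intro x
      rw [hdecomp x]
      ring
    simp only [hrw]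
    rw [MeasureTheory.integral_add
      ((show Continuous fun x => (-S1 * (L * h ^ (β + 1) * KI)) ^ 2 +
          (2 * (-S1 * (L * h ^ (β + 1) * KI))) *
            (L * h ^ β * ∑ i : Fin m, d i * K ((x - c i) / h)) from
        continuous_const.add (continuous_const.mul hDcont)).integrableOn_Icc)
      ((show Continuous fun x => (L * h ^ β * ∑ i : Fin m, d i * K ((x - c i) / h)) ^ 2 from
        hDcont.pow 2).integrableOn_Icc)]
    rw [MeasureTheory.integral_add (continuous_const.integrableOn_Icc)
      ((show Continuous fun x => (2 * (-S1 * (L * h ^ (β + 1) * KI))) *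
            (L * h ^ β * ∑ i : Fin m, d i * K ((x - c i) / h)) from
        continuous_const.mul hDcont).integrableOn_Icc)]
    rw [MeasureTheory.setIntegral_const, MeasureTheory.integral_const_mul, hID, hID2]
    simp [Real.volume_Icc]
    ring
  constructor
  · -- L² bound
    have h1 : S1 ^ 2 ≤ dH * (m : ℝ) := by
      nlinarith [sq_abs S1, abs_nonneg S1, mul_self_nonneg (dH - |S1|)]
    have h2 : S1 ^ 2 * (L * h ^ (β + 1) * KI) ^ 2
        ≤ dH * L ^ 2 * h ^ (2 * β + 1) * (2 * (m : ℝ) * h * KI ^ 2) := by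
      have e : (L * h ^ (β + 1) * KI) ^ 2 = L ^ 2 * h ^ (2 * β + 1) * h * KI ^ 2 := by
        ring
      have hnn : (0 : ℝ) ≤ L ^ 2 * h ^ (2 * β + 1) * h * KI ^ 2 := by positivity
      calc S1 ^ 2 * (L * h ^ (β + 1) * KI) ^ 2
          = S1 ^ 2 * (L ^ 2 * h ^ (2 * β + 1) * h * KI ^ 2) := by rw [e]
        _ ≤ (dH * (m : ℝ)) * (L ^ 2 * h ^ (2 * β + 1) * h * KI ^ 2) :=
            mul_le_mul_of_nonneg_right h1 hnn
        _ ≤ (2 * (dH * (m : ℝ))) * (L ^ 2 * h ^ (2 * β + 1) * h * KI ^ 2) := by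
            nlinarith [mul_nonneg hdH0 (Nat.cast_nonneg m : (0:ℝ) ≤ (m:ℝ))]
        _ = dH * L ^ 2 * h ^ (2 * β + 1) * (2 * (m : ℝ) * h * KI ^ 2) := by ring
    rw [hmain, ge_iff_le, mul_sub]
    linarith
  · -- TV bound
    have hgcont : ∀ ω0 : Fin m → Bool, Continuous (gSmooth K L h β m ω0) := by
      intro ω0
      unfold gSmooth
      exact continuous_const.add (continuous_const.mul (continuous_finset_sum _
        fun i _ => continuous_const.mul (hKcont.comp
          ((continuous_id.sub continuous_const).div_const h))))
    have habscont : Continuous fun x =>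
        |gSmooth K L h β m ω x - gSmooth K L h β m ω' x| :=
      ((hgcont ω).sub (hgcont ω')).abs
    have hRcont : Continuous fun x : ℝ =>
        |(-S1 * (L * h ^ (β + 1) * KI))| +
          L * h ^ β * ∑ i : Fin m, |d i| * K ((x - c i) / h) :=
      continuous_const.add (continuous_const.mul (continuous_finset_sum _
        fun i _ => continuous_const.mul (hFicont i)))
    have hb : ∀ x ∈ Set.Icc (0 : ℝ) 1,
        |gSmooth K L h β m ω x - gSmooth K L h β m ω' x|
        ≤ |(-S1 * (L * h ^ (β + 1) * KI))| +
          L * h ^ β * ∑ i : Fin m, |d i| * K ((x - c i) / h) := by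
      intro x _
      rw [hdecomp x]
      refine (abs_add_le _ _).trans ?_
      have hDb : |L * h ^ β * ∑ i : Fin m, d i * K ((x - c i) / h)|
          ≤ L * h ^ β * ∑ i : Fin m, |d i| * K ((x - c i) / h) := by
        rw [abs_mul, abs_of_pos (by positivity : (0 : ℝ) < L * h ^ β)]
        refine mul_le_mul_of_nonneg_left ?_ (by positivity)
        refine (Finset.abs_sum_le_sum_abs _ _).trans ?_
        refine Finset.sum_le_sum fun i _ => ?_
        rw [abs_mul, abs_of_nonneg (hK0 _)]
      linarith
    have hTVint : (∫ x in Set.Icc (0 : ℝ) 1,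
        |gSmooth K L h β m ω x - gSmooth K L h β m ω' x|)
        ≤ |(-S1 * (L * h ^ (β + 1) * KI))| + dH * (L * h ^ (β + 1) * KI) := by
      calc (∫ x in Set.Icc (0 : ℝ) 1,
            |gSmooth K L h β m ω x - gSmooth K L h β m ω' x|)
          ≤ ∫ x in Set.Icc (0 : ℝ) 1,
            (|(-S1 * (L * h ^ (β + 1) * KI))| +
              L * h ^ β * ∑ i : Fin m, |d i| * K ((x - c i) / h)) :=
            MeasureTheory.setIntegral_mono_on habscont.integrableOn_Icc
              hRcont.integrableOn_Icc measurableSet_Icc hb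
        _ = |(-S1 * (L * h ^ (β + 1) * KI))| + dH * (L * h ^ (β + 1) * KI) := by
            rw [MeasureTheory.integral_add (continuous_const.integrableOn_Icc)
              ((show Continuous fun x => L * h ^ β * ∑ i : Fin m, |d i| * K ((x - c i) / h) from
                continuous_const.mul (continuous_finset_sum _
                fun i _ => continuous_const.mul (hFicont i))).integrableOn_Icc)]
            rw [MeasureTheory.setIntegral_const]
            rw [MeasureTheory.integral_const_mul]
            rw [MeasureTheory.integral_finset_sum _
              (fun i _ => (show Continuous fun x => |d i| * K ((x - c i) / h) from
                continuous_const.mul (hFicont i)).integrableOn_Icc)]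
            simp only [MeasureTheory.integral_const_mul, hIK]
            rw [show ∑ i : Fin m, |d i| * (h * KI)
                = (∑ i : Fin m, |d i|) * (h * KI) from (Finset.sum_mul _ _ _).symm]
            rw [hsumabs]
            simp [Real.volume_Icc]
            ring
    have hCabs : |(-S1 * (L * h ^ (β + 1) * KI))| ≤ dH * (L * h ^ (β + 1) * KI) := by
      rw [abs_mul, abs_neg]
      have hX : (0 : ℝ) ≤ L * h ^ (β + 1) * KI := by positivity
      rw [abs_of_nonneg hX]
      exact mul_le_mul_of_nonneg_right hS1abs hX
    have hdX : dH * (L * h ^ (β + 1) * KI) ≤ (m : ℝ) * (L * h ^ (β + 1) * KI) := by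
      have hX : (0 : ℝ) ≤ L * h ^ (β + 1) * KI := by positivity
      exact mul_le_mul_of_nonneg_right hdHm hX
    have : (m : ℝ) * L * h ^ (β + 1) * KI = (m : ℝ) * (L * h ^ (β + 1) * KI) := by ring
    rw [this]
    linarith
end
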